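/- arXiv:2511.15460 — 2 statements merged into one kernel-verified Lean document; each statement's English description precedes it below -/
import Mathlib

section
/- Let M be a matroid on a finite ground set E with rk(E) ≥ 1, and let A ⊆ E attain Φ_M. Then for every subset Y ⊆ E, we have |A ∩ Y| ≤ Φ_M · rk(A ∩ Y). -/
open Set Matroid

variable {α : Type*}

/-- The rank of a set `A` in a matroid `M`: the size of a largest independent subset of `A`. -/
noncomputable def mrk (M : Matroid α) (A : Set α) : ℕ :=
  sSup {n : ℕ | ∃ I, M.Indep I ∧ I ⊆ A ∧ I.ncard = n}

/-- The total weight of a set of elements. -/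
noncomputable def wSum (w : α → ℝ) (S : Set α) : ℝ := ∑ᶠ e ∈ S, w e

/-- `B` is a minimum-weight base of `M` with respect to the weights `w`. -/
def IsMinWeightBase (M : Matroid α) (w : α → ℝ) (B : Set α) : Prop :=
  M.IsBase B ∧ ∀ B', M.IsBase B' → wSum w B ≤ wSum w B'

/-- A circuit: an inclusion-wise minimal dependent set. -/
def IsCircuit (M : Matroid α) (C : Set α) : Prop :=
  C ⊆ M.E ∧ ¬ M.Indep C ∧ ∀ x ∈ C, M.Indep (C \ {x})

/-- The fractional base packing number `Φ_M`. -/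
noncomputable def PhiM (M : Matroid α) : ℝ :=
  sInf {x : ℝ | ∃ A ⊆ M.E, mrk M (M.E \ A) < mrk M M.E ∧
    x = (A.ncard : ℝ) / ((mrk M M.E : ℝ) - (mrk M (M.E \ A) : ℝ))}

/-- `A` attains the fractional packing number of `M`. -/
def AttainsPhi (M : Matroid α) (A : Set α) : Prop :=
  A ⊆ M.E ∧ mrk M (M.E \ A) < mrk M M.E ∧
    (A.ncard : ℝ) / ((mrk M M.E : ℝ) - (mrk M (M.E \ A) : ℝ)) = PhiM M

/-- The fractional base covering number `β_M`. -/
noncomputable def BetaM (M : Matroid α) : ℝ :=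
  sSup {x : ℝ | ∃ A ⊆ M.E, A.Nonempty ∧ x = (A.ncard : ℝ) / (mrk M A : ℝ)}

/-- The relative load of an element `e` in a base collection `Bs` of size `k`. -/
noncomputable def relLoad {k : ℕ} (Bs : Fin k → Set α) (e : α) : ℝ :=
  (({i | e ∈ Bs i} : Set (Fin k)).ncard : ℝ) / (k : ℝ)

/-! Minimality of `Φ_M` applied to `A \ Y` gives `Φ_M (rk E - rk(E \ (A \ Y))) ≤ |A \ Y|`,
while `|A| = Φ_M (rk E - rk(E \ A))` because `A` attains `Φ_M`. Subtracting, and using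
`E \ (A \ Y) = (E \ A) ∪ (A ∩ Y)` with subadditivity of the rank,
`|A ∩ Y| ≤ Φ_M (rk(E \ (A \ Y)) - rk(E \ A)) ≤ Φ_M rk(A ∩ Y)`. -/

section Rank

variable {M : Matroid α}

lemma bddAbove_indep_ncard (hfin : M.E.Finite) (A : Set α) :
    BddAbove {n : ℕ | ∃ I, M.Indep I ∧ I ⊆ A ∧ I.ncard = n} := by
  refine ⟨M.E.ncard, ?_⟩
  rintro n ⟨I, hI, -, rfl⟩
  exact ncard_le_ncard hI.subset_ground hfin

lemma Matroid.Indep.ncard_le_mrk (hfin : M.E.Finite) {I A : Set α} (hI : M.Indep I)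
    (hIA : I ⊆ A) : I.ncard ≤ mrk M A :=
  le_csSup (bddAbove_indep_ncard hfin A) ⟨I, hI, hIA, rfl⟩

lemma exists_indep_ncard_eq_mrk (hfin : M.E.Finite) (A : Set α) :
    ∃ I, M.Indep I ∧ I ⊆ A ∧ I.ncard = mrk M A :=
  Nat.sSup_mem (s := {n : ℕ | ∃ I, M.Indep I ∧ I ⊆ A ∧ I.ncard = n})
    ⟨0, ∅, M.empty_indep, empty_subset _, ncard_empty α⟩ (bddAbove_indep_ncard hfin A)

lemma mrk_union_le (hfin : M.E.Finite) (X Z : Set α) :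
    mrk M (X ∪ Z) ≤ mrk M X + mrk M Z := by
  obtain ⟨I, hI, hIU, hcard⟩ := exists_indep_ncard_eq_mrk hfin (X ∪ Z)
  have hIZ : I \ X ⊆ Z := fun x hx => (hIU hx.1).resolve_left hx.2
  calc mrk M (X ∪ Z) = (I ∩ X).ncard + (I \ X).ncard :=
        hcard ▸ (ncard_inter_add_ncard_sdiff_eq_ncard I X (hfin.subset hI.subset_ground)).symm
    _ ≤ mrk M X + mrk M Z :=
        add_le_add ((hI.subset inter_subset_left).ncard_le_mrk hfin inter_subset_right)
          ((hI.subset sdiff_subset).ncard_le_mrk hfin hIZ)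

end Rank

section PhiM

variable {M : Matroid α}

lemma PhiM_nonneg (M : Matroid α) : 0 ≤ PhiM M := by
  refine Real.sInf_nonneg ?_
  rintro x ⟨B, -, hlt, rfl⟩
  exact div_nonneg (Nat.cast_nonneg _) (sub_nonneg.mpr (Nat.cast_le.mpr hlt.le))

lemma PhiM_mul_le_ncard {B : Set α} (hB : B ⊆ M.E) :
    PhiM M * ((mrk M M.E : ℝ) - mrk M (M.E \ B)) ≤ B.ncard := by
  rcases lt_or_ge (mrk M (M.E \ B)) (mrk M M.E) with hlt | hge
  · have hpos : (0 : ℝ) < (mrk M M.E : ℝ) - mrk M (M.E \ B) :=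
      sub_pos.mpr (Nat.cast_lt.mpr hlt)
    rw [← le_div_iff₀ hpos]
    exact csInf_le ⟨0, fun x ⟨_, _, hlt', hx⟩ => hx ▸ div_nonneg (Nat.cast_nonneg _)
      (sub_nonneg.mpr (Nat.cast_le.mpr hlt'.le))⟩ ⟨B, hB, hlt, rfl⟩
  · have : (mrk M M.E : ℝ) - mrk M (M.E \ B) ≤ 0 := sub_nonpos.mpr (Nat.cast_le.mpr hge)
    exact (mul_nonpos_of_nonneg_of_nonpos (PhiM_nonneg M) this).trans (Nat.cast_nonneg _)

lemma AttainsPhi.ncard_eq {A : Set α} (hA : AttainsPhi M A) :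
    (A.ncard : ℝ) = PhiM M * ((mrk M M.E : ℝ) - mrk M (M.E \ A)) := by
  obtain ⟨-, hlt, heq⟩ := hA
  rw [← heq, div_mul_cancel₀]
  exact (sub_pos.mpr (Nat.cast_lt.mpr hlt)).ne'

end PhiM

lemma diff_diff_eq_diff_union_inter {E A Y : Set α} (hA : A ⊆ E) :
    E \ (A \ Y) = (E \ A) ∪ (A ∩ Y) := by
  ext x
  by_cases hxA : x ∈ A
  · simp [hxA, hA hxA]
  · simp [hxA]

theorem stmt_9_general (M : Matroid α) (hfin : M.E.Finite)
    (A : Set α) (hA : AttainsPhi M A) :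
    ∀ Y ⊆ M.E, ((A ∩ Y).ncard : ℝ) ≤ PhiM M * (mrk M (A ∩ Y) : ℝ) := by
  intro Y _
  have hAE : A ⊆ M.E := hA.1
  have hsplit : ((A ∩ Y).ncard : ℝ) + (A \ Y).ncard = A.ncard := by
    exact_mod_cast ncard_inter_add_ncard_sdiff_eq_ncard A Y (hfin.subset hAE)
  have hrest := PhiM_mul_le_ncard (M := M) (sdiff_subset.trans hAE : A \ Y ⊆ M.E)
  have hsub : (mrk M (M.E \ (A \ Y)) : ℝ) ≤ mrk M (M.E \ A) + mrk M (A ∩ Y) := by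
    rw [diff_diff_eq_diff_union_inter hAE]
    exact_mod_cast mrk_union_le hfin _ _
  have hPhi := PhiM_nonneg M
  linarith [hA.ncard_eq, mul_le_mul_of_nonneg_left hsub hPhi]

/-- If `A` attains `Φ_M`, then `|A ∩ Y| ≤ Φ_M · rk(A ∩ Y)` for every `Y ⊆ E`. -/
theorem stmt_9 (M : Matroid α) (hfin : M.E.Finite) (hrk : 1 ≤ mrk M M.E)
    (A : Set α) (hA : AttainsPhi M A) :
    ∀ Y ⊆ M.E, ((A ∩ Y).ncard : ℝ) ≤ PhiM M * (mrk M (A ∩ Y) : ℝ) :=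
  stmt_9_general M hfin A hA
end

section
/- Let M be a matroid on a finite ground set E, let A ⊆ E, and let w : E → ℝ be a weight function such that w(b) < w(a) for every b ∈ E\A and every a ∈ A. Then for every minimum-weight base B of M with respect to w, the set B ∩ A is a base of the contraction M·A (and B ∩ (E\A) is a base of the restriction M|(E\A)). -/
open Set Matroid

variable {α : Type*}

/-- Independence in the contraction `M·A`: `X ⊆ A` is independent iff `X ∪ B₀` is
independent in `M` for some base `B₀` of the restriction `M|(E \ A)`. -/
def ConIndep (M : Matroid α) (A X : Set α) : Prop :=
  X ⊆ A ∧ ∃ B₀, (M ↾ (M.E \ A)).IsBase B₀ ∧ M.Indep (X ∪ B₀)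

/-- A base of the contraction `M·A`: a maximal `ConIndep` set. -/
def ConBase (M : Matroid α) (A B : Set α) : Prop :=
  Maximal (ConIndep M A) B


/-!
Let `D = E \ A`. If `B ∩ D` were not a base of `M|D`, some `e ∈ D \ B` could be added to it;
the fundamental circuit of `e` with respect to `B` then leaves `insert e (B ∩ D)`, i.e. contains
some `a ∈ B ∩ A`, and exchanging `a` for `e` gives a base of strictly smaller weight.
Once `B ∩ D` is a basis of `D`, `B \ D = B ∩ A` is a base of `M ／ D`, which is the
contraction `M·A` of the statement.
-/

namespace Matroid

variable {M : Matroid α} {B I X : Set α} {e : α}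

lemma IsBase.exists_exchange_of_insert_indep (hB : M.IsBase B) (heE : e ∈ M.E)
    (heB : e ∉ B) (hI : M.Indep (insert e I)) : ∃ a ∈ B \ I, M.IsBase (insert e B \ {a}) := by
  obtain ⟨a, haC, haI⟩ := not_subset.1 fun h ↦
    (hB.fundCircuit_isCircuit heE heB).not_indep (hI.subset h)
  have hae : a ≠ e := by rintro rfl; exact haI (mem_insert a I)
  have haB : a ∈ B := (mem_insert_iff.1 (M.fundCircuit_subset_insert e B haC)).resolve_left hae
  have hindep : M.Indep (insert e B \ {a}) :=
    (hB.indep.mem_fundCircuit_iff (by rwa [hB.closure_eq]) heB).1 haC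
  exact ⟨a, ⟨haB, fun h ↦ haI (mem_insert_of_mem e h)⟩,
    hB.exchange_isBase_of_indep' haB heB hindep⟩

lemma IsBase.contract_isBase_sdiff (hB : M.IsBase B) (hBX : M.IsBasis (B ∩ X) X) :
    (M ／ X).IsBase (B \ X) := by
  rw [isBase_iff_maximal_indep]
  refine ⟨hBX.contract_indep_iff.2 ⟨by rw [sdiff_union_inter]; exact hB.indep,
    disjoint_sdiff_right⟩, fun J hJ hBJ ↦ ?_⟩
  obtain ⟨hJi, hXJ⟩ := hBX.contract_indep_iff.1 hJ
  have hJB : J ∪ (B ∩ X) = B := (hB.eq_of_subset_indep hJi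
    ((sdiff_union_inter B X).symm.subset.trans (union_subset_union_left _ hBJ))).symm
  exact fun x hxJ ↦ ⟨hJB ▸ mem_union_left _ hxJ, hXJ.notMem_of_mem_right hxJ⟩

end Matroid

lemma wSum_insert_sdiff_singleton (w : α → ℝ) {B : Set α} {a e : α} (hB : B.Finite)
    (ha : a ∈ B) (he : e ∉ B) : wSum w (insert e B \ {a}) = wSum w B + w e - w a := by
  have hae : a ≠ e := ne_of_mem_of_not_mem ha he
  have hBa : wSum w B = w a + wSum w (B \ {a}) := by
    conv_lhs => rw [← insert_sdiff_self_of_mem ha]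
    exact finsum_mem_insert w (fun h ↦ h.2 rfl) hB.sdiff
  rw [hBa, ← insert_sdiff_singleton_comm hae.symm, wSum,
    finsum_mem_insert w (fun h ↦ he h.1) hB.sdiff, wSum]
  ring

namespace IsMinWeightBase

variable {M : Matroid α} {w : α → ℝ} {B : Set α}

lemma le_of_exchange (hB : IsMinWeightBase M w B) (hBfin : B.Finite) {a e : α} (ha : a ∈ B)
    (he : e ∉ B) (hB' : M.IsBase (insert e B \ {a})) : w a ≤ w e := by
  have := hB.2 _ hB'
  rw [wSum_insert_sdiff_singleton w hBfin ha he] at this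
  linarith

lemma isBase_restrict_inter (hB : IsMinWeightBase M w B) (hBfin : B.Finite) {D : Set α}
    (hD : D ⊆ M.E) (hw : ∀ b ∈ D, ∀ a ∈ M.E \ D, w b < w a) :
    (M ↾ D).IsBase (B ∩ D) := by
  refine Indep.isBase_of_forall_insert
    (restrict_indep_iff.2 ⟨hB.1.indep.subset inter_subset_left, inter_subset_right⟩) ?_
  rintro e ⟨heD, heBD⟩ hins
  have heB : e ∉ B := fun h ↦ heBD ⟨h, heD⟩
  obtain ⟨a, ⟨haB, haBD⟩, hB'⟩ := hB.1.exists_exchange_of_insert_indep (hD heD) heB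
    (restrict_indep_iff.1 hins).1
  have haD : a ∈ M.E \ D := ⟨hB.1.subset_ground haB, fun h ↦ haBD ⟨haB, h⟩⟩
  exact (hw e heD a haD).not_ge (hB.le_of_exchange hBfin haB heB hB')

end IsMinWeightBase

section Contraction

variable {M : Matroid α} {A : Set α}

lemma conIndep_eq_contract_indep (hA : A ⊆ M.E) : ConIndep M A = (M ／ (M.E \ A)).Indep := by
  ext X
  constructor
  · rintro ⟨hXA, B₀, hB₀, hX⟩
    exact ((isBase_restrict_iff sdiff_subset).1 hB₀).contract_indep_iff.2
      ⟨hX, disjoint_sdiff_left.mono_right hXA⟩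
  · intro hX
    obtain ⟨I, hI⟩ := M.exists_isBasis (M.E \ A) sdiff_subset
    refine ⟨?_, I, (isBase_restrict_iff sdiff_subset).2 hI, (hI.contract_indep_iff.1 hX).1⟩
    simpa [sdiff_sdiff_cancel_left hA] using hX.subset_ground

lemma conBase_iff_contract_isBase (hA : A ⊆ M.E) {X : Set α} :
    ConBase M A X ↔ (M ／ (M.E \ A)).IsBase X := by
  rw [ConBase, conIndep_eq_contract_indep hA, isBase_iff_maximal_indep]

end Contraction

/-- If all elements of `E \ A` are lighter than all elements of `A`, then every
minimum-weight base `B` of `M` meets `A` in a base of the contraction `M·A`, and meets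
`E \ A` in a base of the restriction `M|(E \ A)`. -/
theorem stmt_17 (M : Matroid α) (hfin : M.E.Finite) (A : Set α) (hA : A ⊆ M.E)
    (w : α → ℝ) (hw : ∀ b ∈ M.E \ A, ∀ a ∈ A, w b < w a)
    (B : Set α) (hB : IsMinWeightBase M w B) :
    ConBase M A (B ∩ A) ∧ (M ↾ (M.E \ A)).IsBase (B ∩ (M.E \ A)) := by
  have hrestrict : (M ↾ (M.E \ A)).IsBase (B ∩ (M.E \ A)) :=
    hB.isBase_restrict_inter (hfin.subset hB.1.subset_ground) sdiff_subset
      (by rwa [sdiff_sdiff_cancel_left hA])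
  have hcontract := hB.1.contract_isBase_sdiff ((isBase_restrict_iff sdiff_subset).1 hrestrict)
  rw [sdiff_sdiff_right, sdiff_eq_empty.2 hB.1.subset_ground, empty_union] at hcontract
  exact ⟨(conBase_iff_contract_isBase hA).2 hcontract, hrestrict⟩
end
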